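/- In the sufficiency proof setup for Lalley–Gatzouras sets: let F = ⋃_{i∈𝓘} φ_i(F) be the projection self-similar set with a gap (some open interval I ⊆ [0,1] disjoint from F), and for δ > 0 and w ∈ 𝓘_δ let B = ⋃_{v ∈ 𝓘_δ(w)} φ_v(F), where 𝓘_δ(w) is the δ-connected component of w in 𝓘_δ. Then for any y₀ ∈ φ_w(F): (y₀−δ, y₀+δ) ∩ F ⊆ B, dist(B, F∖B) > δ, and |B| ≤ 2Lδ where L = sup_{δ,w} #𝓘_δ(w) < ∞. -/

import Mathlib

/-- Composition `φ_w = φ_{i₁} ∘ ⋯ ∘ φ_{i_ℓ}` of the maps `φ_i (y) = b i * y + dd i`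
along a finite word `w`. -/
def phiWord {m : ℕ} (b dd : Fin m → ℝ) : List (Fin m) → ℝ → ℝ
  | [] => id
  | i :: w => fun y => b i * phiWord b dd w y + dd i

/-- The distance `dist(A, B) = inf {|a - b| : a ∈ A, b ∈ B}` between two sets of reals. -/
noncomputable def setDist (A B : Set ℝ) : ℝ := sInf (Set.image2 dist A B)

/-- The `δ`-stopping words over the alphabet `I`:
`𝓘_δ = {i₁…i_k : b_{i₁}⋯b_{i_k} ≤ δ < b_{i₁}⋯b_{i_{k-1}}}`. -/
def IdxDelta {m : ℕ} (b : Fin m → ℝ) (I : Finset (Fin m)) (δ : ℝ) : Set (List (Fin m)) :=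
  {w | w ≠ [] ∧ (∀ i ∈ w, i ∈ I) ∧ (w.map b).prod ≤ δ ∧ δ < (w.dropLast.map b).prod}

/-- `w` and `w'` in `𝓘_δ` are `δ`-connected: there is a chain `w = g 0, …, g k = w'` in
`𝓘_δ` with `dist(φ_{g l}(F), φ_{g (l+1)}(F)) ≤ δ` for all `l`. -/
def DeltaConn {m : ℕ} (b dd : Fin m → ℝ) (I : Finset (Fin m)) (F : Set ℝ) (δ : ℝ)
    (w w' : List (Fin m)) : Prop :=
  ∃ (k : ℕ) (g : ℕ → List (Fin m)), g 0 = w ∧ g k = w' ∧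
    (∀ l ≤ k, g l ∈ IdxDelta b I δ) ∧
    ∀ l < k, setDist (phiWord b dd (g l) '' F) (phiWord b dd (g (l + 1)) '' F) ≤ δ

/-!
Every point of `F` lies in a piece `φ_v(F)` with `v ∈ 𝓘_δ`, and such a piece has diameter at most
`b_v ≤ δ`. If a point of `F` is within `δ` of a piece of `B`, the piece containing it is at set
distance at most `δ` from that one, so it is `δ`-connected to `w` and the point lies in `B`; this
gives the first two claims. For the diameter, regard `δ`-connectedness as reachability in a graph
and join two pieces of `B` by a path: its vertices are distinct words of `𝓘_δ(w)`, so it has at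
most `L` vertices, and each step adds at most `2δ` to the distance.
-/

section PhiWord

variable {m : ℕ} {b dd : Fin m → ℝ}

lemma phiWord_append (u v : List (Fin m)) (y : ℝ) :
    phiWord b dd (u ++ v) y = phiWord b dd u (phiWord b dd v y) := by
  induction u with
  | nil => rfl
  | cons i u ih => simp [phiWord, ih]

lemma phiWord_sub (v : List (Fin m)) (y z : ℝ) :
    phiWord b dd v y - phiWord b dd v z = (v.map b).prod * (y - z) := by
  induction v with
  | nil => simp [phiWord]
  | cons i v ih =>
    simp only [phiWord, List.map_cons, List.prod_cons]
    linear_combination b i * ih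

lemma prod_map_nonneg (hb : ∀ i, 0 < b i) (v : List (Fin m)) : 0 ≤ (v.map b).prod :=
  List.prod_nonneg (by simpa using fun i _ => (hb i).le)

lemma lipschitzWith_phiWord (hb : ∀ i, 0 < b i) (v : List (Fin m)) :
    LipschitzWith ⟨(v.map b).prod, prod_map_nonneg hb v⟩ (phiWord b dd v) :=
  LipschitzWith.of_dist_le_mul fun y z => by
    rw [Real.dist_eq, phiWord_sub, abs_mul, abs_of_nonneg (prod_map_nonneg hb v)]
    rfl

lemma diam_phiWord_image_le (hb : ∀ i, 0 < b i) {F : Set ℝ} (hF01 : F ⊆ Set.Icc 0 1)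
    (v : List (Fin m)) : Metric.diam (phiWord b dd v '' F) ≤ (v.map b).prod := by
  have hdiamF : Metric.diam F ≤ 1 := by
    simpa [Real.diam_Icc zero_le_one] using Metric.diam_mono hF01 (Metric.isBounded_Icc 0 1)
  calc Metric.diam (phiWord b dd v '' F)
      ≤ (v.map b).prod * Metric.diam F :=
        (lipschitzWith_phiWord (dd := dd) hb v).diam_image_le F
          (Metric.isBounded_Icc 0 1 |>.subset hF01)
    _ ≤ (v.map b).prod := mul_le_of_le_one_right (prod_map_nonneg hb v) hdiamF

end PhiWord

section IdxDelta

variable {m : ℕ} {b dd : Fin m → ℝ} {I : Finset (Fin m)} {F : Set ℝ} {δ : ℝ}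

lemma lt_one_of_mem_idxDelta (hb : ∀ i, 0 < b i) (hb1 : ∀ i, b i < 1) {w : List (Fin m)}
    (hw : w ∈ IdxDelta b I δ) : δ < 1 :=
  hw.2.2.2.trans_le <| by
    simpa using List.prod_map_le_prod_map₀ (s := w.dropLast) b (fun _ => 1)
      (fun i _ => (hb i).le) (fun i _ => (hb1 i).le)

/-- Unfold `F` through its attractor equation one letter at a time; since each letter multiplies
the product by at most `c`, the product drops to `δ` within `n` letters. -/
lemma exists_idxDelta_mem_image_of_pow_le {c : ℝ} (hc : 0 ≤ c) (hbc : ∀ i, b i ≤ c)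
    (hb : ∀ i, 0 < b i) (hFattr : F = ⋃ i ∈ I, (fun y => b i * y + dd i) '' F) (n : ℕ) :
    ∀ u : List (Fin m), (∀ i ∈ u, i ∈ I) → δ < (u.map b).prod →
      (u.map b).prod * c ^ n ≤ δ → ∀ z ∈ F,
      ∃ v ∈ IdxDelta b I δ, phiWord b dd u z ∈ phiWord b dd v '' F := by
  induction n with
  | zero => intro u _ hδu hu; simp only [pow_zero, mul_one] at hu; linarith
  | succ n ih =>
    intro u huI hδu hu z hz
    rw [hFattr] at hz
    simp only [Set.mem_iUnion, Set.mem_image] at hz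
    obtain ⟨i, hi, z', hz', rfl⟩ := hz
    have hu'I : ∀ j ∈ u ++ [i], j ∈ I := by
      simpa [or_imp, forall_and] using ⟨huI, hi⟩
    have hcomp : phiWord b dd u (b i * z' + dd i) = phiWord b dd (u ++ [i]) z' := by
      simp [phiWord_append, phiWord]
    rw [hcomp]
    by_cases hstop : ((u ++ [i]).map b).prod ≤ δ
    · exact ⟨u ++ [i], ⟨by simp, hu'I, hstop, by simpa using hδu⟩, z', hz', rfl⟩
    · refine ih (u ++ [i]) hu'I (not_le.mp hstop) ?_ z' hz'
      calc ((u ++ [i]).map b).prod * c ^ n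
          = (u.map b).prod * (b i * c ^ n) := by
            simp only [List.map_append, List.prod_append, List.map_singleton,
              List.prod_singleton]
            ring
        _ ≤ (u.map b).prod * c ^ (n + 1) := by
          rw [pow_succ']
          gcongr
          · exact prod_map_nonneg hb u
          · exact hbc i
        _ ≤ δ := hu

lemma exists_idxDelta_mem_image (hb : ∀ i, 0 < b i) (hb1 : ∀ i, b i < 1) (hδ : 0 < δ)
    (hδ1 : δ < 1) (hFattr : F = ⋃ i ∈ I, (fun y => b i * y + dd i) '' F) {y : ℝ}
    (hy : y ∈ F) : ∃ v ∈ IdxDelta b I δ, y ∈ phiWord b dd v '' F := by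
  obtain ⟨c, hc0, hc1, hbc⟩ : ∃ c, 0 ≤ c ∧ c < 1 ∧ ∀ i, b i ≤ c := by
    rcases isEmpty_or_nonempty (Fin m) with _ | _
    · exact ⟨0, le_rfl, one_pos, fun i => isEmptyElim i⟩
    · obtain ⟨j, hj⟩ := Finite.exists_max b
      exact ⟨b j, (hb j).le, hb1 j, hj⟩
  obtain ⟨n, hn⟩ := exists_pow_lt_of_lt_one hδ hc1
  exact exists_idxDelta_mem_image_of_pow_le hc0 hbc hb hFattr n [] (by simp)
    (by simpa using hδ1) (by simpa using hn.le) y hy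

end IdxDelta

lemma setDist_le {A B : Set ℝ} {a c : ℝ} (ha : a ∈ A) (hc : c ∈ B) :
    setDist A B ≤ dist a c :=
  csInf_le ⟨0, by rintro _ ⟨_, _, _, _, rfl⟩; exact dist_nonneg⟩ (Set.mem_image2_of_mem ha hc)

lemma setDist_comm (A B : Set ℝ) : setDist A B = setDist B A := by
  simp only [setDist, Set.image2_swap dist A B, dist_comm]

lemma exists_dist_eq_setDist {A B : Set ℝ} (hA : IsCompact A) (hB : IsCompact B)
    (hAne : A.Nonempty) (hBne : B.Nonempty) :
    ∃ a ∈ A, ∃ c ∈ B, dist a c = setDist A B := by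
  have hcpt : IsCompact (Set.image2 dist A B) := by
    rw [← Set.image_prod]
    exact (hA.prod hB).image (continuous_fst.dist continuous_snd)
  exact hcpt.sInf_mem (hAne.image2 hBne)

lemma SimpleGraph.Walk.IsPath.length_lt_ncard {V : Type*} {G : SimpleGraph V} {u v : V}
    {p : G.Walk u v} (hp : p.IsPath) {S : Set V} (hS : S.Finite) (hpS : ∀ x ∈ p.support, x ∈ S) :
    p.length < S.ncard := by
  classical
  calc p.length < p.support.toFinset.card := by
        rw [List.toFinset_card_of_nodup hp.support_nodup, p.length_support]; omega
    _ = (p.support.toFinset : Set V).ncard := (Set.ncard_coe_finset _).symm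
    _ ≤ S.ncard := Set.ncard_le_ncard (by simpa [Set.subset_def] using hpS) hS

section DeltaGraph

variable {m : ℕ} {b dd : Fin m → ℝ} {I : Finset (Fin m)} {F : Set ℝ} {δ : ℝ}

/-- The graph on all words whose components inside `𝓘_δ` are the `δ`-connected components;
words outside `𝓘_δ` are isolated. -/
def deltaGraph (b dd : Fin m → ℝ) (I : Finset (Fin m)) (F : Set ℝ) (δ : ℝ) :
    SimpleGraph (List (Fin m)) where
  Adj v v' := v ≠ v' ∧ v ∈ IdxDelta b I δ ∧ v' ∈ IdxDelta b I δ ∧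
    setDist (phiWord b dd v '' F) (phiWord b dd v' '' F) ≤ δ
  symm := ⟨fun _ _ ⟨hne, hv, hv', h⟩ => ⟨hne.symm, hv', hv, setDist_comm _ _ ▸ h⟩⟩
  loopless := ⟨fun _ h => h.1 rfl⟩

lemma deltaGraph_adj {v v' : List (Fin m)} :
    (deltaGraph b dd I F δ).Adj v v' ↔ v ≠ v' ∧ v ∈ IdxDelta b I δ ∧ v' ∈ IdxDelta b I δ ∧
      setDist (phiWord b dd v '' F) (phiWord b dd v' '' F) ≤ δ :=
  Iff.rfl

lemma deltaGraph_reachable_of_setDist_le {v v' : List (Fin m)} (hv : v ∈ IdxDelta b I δ)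
    (hv' : v' ∈ IdxDelta b I δ) (h : setDist (phiWord b dd v '' F) (phiWord b dd v' '' F) ≤ δ) :
    (deltaGraph b dd I F δ).Reachable v v' := by
  by_cases hvv' : v = v'
  · exact hvv' ▸ .rfl
  · exact (deltaGraph_adj.mpr ⟨hvv', hv, hv', h⟩).reachable

lemma deltaConn_cons {u v w : List (Fin m)} (hadj : (deltaGraph b dd I F δ).Adj u v)
    (h : DeltaConn b dd I F δ v w) : DeltaConn b dd I F δ u w := by
  obtain ⟨-, hu, -, huv⟩ := deltaGraph_adj.mp hadj
  obtain ⟨k, g, rfl, rfl, hmem, hdist⟩ := h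
  refine ⟨k + 1, fun l => if l = 0 then u else g (l - 1), rfl, by simp, ?_, ?_⟩
  · rintro (_ | l) hl
    exacts [hu, hmem l (by omega)]
  · rintro (_ | l) hl
    exacts [huv, hdist l (by omega)]

lemma deltaConn_iff {w w' : List (Fin m)} :
    DeltaConn b dd I F δ w w' ↔
      w ∈ IdxDelta b I δ ∧ (deltaGraph b dd I F δ).Reachable w w' := by
  constructor
  · rintro ⟨k, g, rfl, rfl, hmem, hdist⟩
    refine ⟨hmem 0 k.zero_le, ?_⟩
    suffices ∀ l ≤ k, (deltaGraph b dd I F δ).Reachable (g 0) (g l) from this k le_rfl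
    intro l hl
    induction l with
    | zero => rfl
    | succ l ih =>
      exact (ih (by omega)).trans <| deltaGraph_reachable_of_setDist_le
        (hmem l (by omega)) (hmem (l + 1) hl) (hdist l hl)
  · rintro ⟨hw, ⟨p⟩⟩
    induction p with
    | nil => exact ⟨0, fun _ => _, rfl, rfl, fun _ _ => hw, fun _ h => absurd h (by omega)⟩
    | cons hadj _ ih => exact deltaConn_cons hadj (ih (deltaGraph_adj.mp hadj).2.2.1)

lemma DeltaConn.mem_idxDelta_right {w w' : List (Fin m)} (h : DeltaConn b dd I F δ w w') :
    w' ∈ IdxDelta b I δ := by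
  obtain ⟨k, g, -, rfl, hmem, -⟩ := h
  exact hmem k le_rfl

lemma dist_le_of_mem_idxDelta (hb : ∀ i, 0 < b i) (hFc : IsCompact F)
    (hF01 : F ⊆ Set.Icc 0 1) {v : List (Fin m)} (hv : v ∈ IdxDelta b I δ) {x y : ℝ}
    (hx : x ∈ phiWord b dd v '' F) (hy : y ∈ phiWord b dd v '' F) : dist x y ≤ δ :=
  calc dist x y ≤ Metric.diam (phiWord b dd v '' F) :=
        Metric.dist_le_diam_of_mem
          (hFc.image (lipschitzWith_phiWord hb v).continuous).isBounded hx hy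
    _ ≤ δ := (diam_phiWord_image_le hb hF01 v).trans hv.2.2.1

/-- Each edge of a walk costs at most `δ` to cross plus `δ` for the diameter of the next piece. -/
lemma dist_le_of_walk (hb : ∀ i, 0 < b i) (hFne : F.Nonempty) (hFc : IsCompact F)
    (hF01 : F ⊆ Set.Icc 0 1) {v v' : List (Fin m)} (p : (deltaGraph b dd I F δ).Walk v v')
    (hv : v ∈ IdxDelta b I δ) {x y : ℝ} (hx : x ∈ phiWord b dd v '' F)
    (hy : y ∈ phiWord b dd v' '' F) : dist x y ≤ (2 * p.length + 1) * δ := by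
  induction p generalizing x with
  | nil => simpa using dist_le_of_mem_idxDelta hb hFc hF01 hv hx hy
  | @cons v u v' hadj p ih =>
    obtain ⟨-, -, hu, hvu⟩ := deltaGraph_adj.mp hadj
    have hpiece : ∀ s, IsCompact (phiWord b dd s '' F) := fun s =>
      hFc.image (lipschitzWith_phiWord hb s).continuous
    obtain ⟨a, ha, c, hc, hac⟩ :=
      exists_dist_eq_setDist (hpiece v) (hpiece u) (hFne.image _) (hFne.image _)
    calc dist x y ≤ dist x a + dist a c + dist c y := dist_triangle4 x a c y
      _ ≤ δ + δ + (2 * p.length + 1) * δ := by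
        gcongr
        · exact dist_le_of_mem_idxDelta hb hFc hF01 hv hx ha
        · exact hac ▸ hvu
        · exact ih hu hc hy
      _ = (2 * (p.cons hadj).length + 1) * δ := by
        rw [SimpleGraph.Walk.length_cons]; push_cast; ring

/-- The block `B` of the paper. -/
def deltaBlock (b dd : Fin m → ℝ) (I : Finset (Fin m)) (F : Set ℝ) (δ : ℝ)
    (w : List (Fin m)) : Set ℝ :=
  ⋃ v ∈ {v | DeltaConn b dd I F δ w v}, phiWord b dd v '' F

lemma mem_deltaBlock_of_dist_le (hb : ∀ i, 0 < b i) (hb1 : ∀ i, b i < 1) (hδ : 0 < δ)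
    (hFattr : F = ⋃ i ∈ I, (fun y => b i * y + dd i) '' F) {w v : List (Fin m)}
    (hwv : DeltaConn b dd I F δ w v) {x y : ℝ} (hx : x ∈ phiWord b dd v '' F) (hy : y ∈ F)
    (hxy : dist x y ≤ δ) : y ∈ deltaBlock b dd I F δ w := by
  have hv := hwv.mem_idxDelta_right
  obtain ⟨v', hv', hyv'⟩ :=
    exists_idxDelta_mem_image hb hb1 hδ (lt_one_of_mem_idxDelta hb hb1 hv) hFattr hy
  obtain ⟨hw, hreach⟩ := deltaConn_iff.mp hwv
  have hvv' := deltaGraph_reachable_of_setDist_le hv hv' ((setDist_le hx hyv').trans hxy)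
  exact Set.mem_biUnion (deltaConn_iff.mpr ⟨hw, hreach.trans hvv'⟩) hyv'

lemma diam_deltaBlock_le (hb : ∀ i, 0 < b i) (hFne : F.Nonempty) (hFc : IsCompact F)
    (hF01 : F ⊆ Set.Icc 0 1) (hδ : 0 ≤ δ) {w : List (Fin m)} {L : ℕ}
    (hfin : {v | DeltaConn b dd I F δ w v}.Finite)
    (hcard : {v | DeltaConn b dd I F δ w v}.ncard ≤ L) :
    Metric.diam (deltaBlock b dd I F δ w) ≤ 2 * L * δ := by
  refine Metric.diam_le_of_forall_dist_le (by positivity) fun x hx y hy => ?_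
  simp only [deltaBlock, Set.mem_iUnion, Set.mem_ofPred_eq, exists_prop] at hx hy
  obtain ⟨v, hwv, hxv⟩ := hx
  obtain ⟨v', hwv', hyv'⟩ := hy
  obtain ⟨hw, hreach⟩ := deltaConn_iff.mp hwv
  obtain ⟨p, hp⟩ := (hreach.symm.trans (deltaConn_iff.mp hwv').2).exists_isPath
  have hlen : p.length < L := by
    refine (hp.length_lt_ncard hfin fun s hs => ?_).trans_le hcard
    exact deltaConn_iff.mpr ⟨hw, hreach.trans (p.takeUntil s hs).reachable⟩
  calc dist x y ≤ (2 * p.length + 1) * δ :=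
        dist_le_of_walk hb hFne hFc hF01 p hwv.mem_idxDelta_right hxv hyv'
    _ ≤ 2 * L * δ := by
      gcongr
      have : (p.length : ℝ) + 1 ≤ L := by exact_mod_cast hlen
      linarith

end DeltaGraph

theorem projection_block_structure_general {m : ℕ} (b dd : Fin m → ℝ)
    (hb : ∀ i, 0 < b i) (hb1 : ∀ i, b i < 1)
    (I : Finset (Fin m))
    (F : Set ℝ) (hFne : F.Nonempty) (hFc : IsCompact F) (hF01 : F ⊆ Set.Icc 0 1)
    (hFattr : F = ⋃ i ∈ I, (fun y => b i * y + dd i) '' F)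
    (L : ℕ)
    (hL : ∀ δ > (0 : ℝ), ∀ w ∈ IdxDelta b I δ,
      {w' | DeltaConn b dd I F δ w w'}.Finite ∧
      {w' | DeltaConn b dd I F δ w w'}.ncard ≤ L)
    (δ : ℝ) (hδ : 0 < δ) (w : List (Fin m)) (hw : w ∈ IdxDelta b I δ)
    (y₀ : ℝ) (hy₀ : y₀ ∈ phiWord b dd w '' F) :
    ∀ B : Set ℝ, B = ⋃ w' ∈ {w' | DeltaConn b dd I F δ w w'}, phiWord b dd w' '' F →
      (Set.Ioo (y₀ - δ) (y₀ + δ) ∩ F ⊆ B) ∧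
      (∀ p ∈ B, ∀ q ∈ F \ B, δ < dist p q) ∧
      Metric.diam B ≤ 2 * L * δ := by
  rintro B rfl
  have hww : DeltaConn b dd I F δ w w := deltaConn_iff.mpr ⟨hw, .rfl⟩
  obtain ⟨hfin, hcard⟩ := hL δ hδ w hw
  refine ⟨fun y ⟨hy, hyF⟩ => ?_, fun p hp q hq => ?_,
    diam_deltaBlock_le hb hFne hFc hF01 hδ.le hfin hcard⟩
  · refine mem_deltaBlock_of_dist_le hb hb1 hδ hFattr hww hy₀ hyF ?_
    rw [Real.dist_eq, abs_sub_comm]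
    exact (abs_sub_lt_iff.mpr ⟨by linarith [hy.2], by linarith [hy.1]⟩).le
  · obtain ⟨v, hwv, hpv⟩ := Set.mem_iUnion₂.mp hp
    by_contra! hpq
    exact hq.2 (mem_deltaBlock_of_dist_le hb hb1 hδ hFattr hwv hpv hq.1 hpq)

/-- in the sufficiency proof, for `w ∈ 𝓘_δ`, `y₀ ∈ φ_w(F)` and
`B = ⋃_{v ∈ 𝓘_δ(w)} φ_v(F)` (over the `δ`-connected component `𝓘_δ(w)` of `w`):
`(y₀-δ, y₀+δ) ∩ F ⊆ B`, `dist(B, F \ B) > δ` (pointwise), and `|B| ≤ 2Lδ`,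
where `L = sup_{δ, w} #𝓘_δ(w) < ∞`. -/
theorem projection_block_structure {m : ℕ} (hm : 0 < m) (b dd : Fin m → ℝ)
    (hb : ∀ i, 0 < b i) (hb1 : ∀ i, b i < 1) (hbs : ∑ i, b i = 1)
    (hd : ∀ i, dd i = ∑ k ∈ Finset.univ.filter (fun k => k < i), b k)
    (I : Finset (Fin m)) (hIne : I.Nonempty) (hIproper : I ≠ Finset.univ)
    (F : Set ℝ) (hFne : F.Nonempty) (hFc : IsCompact F) (hF01 : F ⊆ Set.Icc 0 1)
    (hFattr : F = ⋃ i ∈ I, (fun y => b i * y + dd i) '' F)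
    (u v : ℝ) (huv : u < v) (hsub : Set.Ioo u v ⊆ Set.Icc 0 1)
    (hgapF : Set.Ioo u v ∩ F = ∅)
    (L : ℕ)
    (hL : ∀ δ > (0 : ℝ), ∀ w ∈ IdxDelta b I δ,
      {w' | DeltaConn b dd I F δ w w'}.Finite ∧
      {w' | DeltaConn b dd I F δ w w'}.ncard ≤ L)
    (δ : ℝ) (hδ : 0 < δ) (w : List (Fin m)) (hw : w ∈ IdxDelta b I δ)
    (y₀ : ℝ) (hy₀ : y₀ ∈ phiWord b dd w '' F) :
    ∀ B : Set ℝ, B = ⋃ w' ∈ {w' | DeltaConn b dd I F δ w w'}, phiWord b dd w' '' F →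
      (Set.Ioo (y₀ - δ) (y₀ + δ) ∩ F ⊆ B) ∧
      (∀ p ∈ B, ∀ q ∈ F \ B, δ < dist p q) ∧
      Metric.diam B ≤ 2 * L * δ :=
  projection_block_structure_general b dd hb hb1 I F hFne hFc hF01 hFattr L hL δ hδ w hw y₀ hy₀
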